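/- arXiv:math/0408423 — 2 statements merged into one kernel-verified Lean document; each statement's English description precedes it below -/
import Mathlib

section
/- Let (X, d) be a metric space with a Borel measure μ, let x ∈ X, and suppose there is a constant D > 0 with μ(B(x,2s)) ≤ D·μ(B(x,s)) for all s > 0, and that 0 < μ(B(x,s)) < ∞ for all s > 0. Let f : X → ℝ be measurable with 0 ≤ f ≤ M for a constant M > 0, and set k(x,s) = (1/μ(B(x,s))) ∫_{B(x,s)} f dμ. Suppose there is a constant C > 0 such that ∫_0^r s·k(x,s) ds ≤ C·log(2+r) for all r > 0. Then for every ε ∈ (0,1) there exists a constant C' > 0 such that k(x,r) ≤ C'/(1+r)^{1+ε} for all r > 0. -/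
open MeasureTheory Metric Set

/-!
Doubling makes the ball average `k` almost monotone: `k r ≤ D k(s)` for `r ≤ s ≤ 2r`. Hence
`∫_r^{2r} s k(s) ds ≥ (3r²/2) k(r)/D`, and the hypothesis at radius `2r` gives
`k(r) ≲ log(2 + 2r)/r²`, which beats `(1 + r)^{-(1+ε)}` for every `ε < 1`; for small `r`
the bound `k ≤ M` suffices.
-/

section SetAverage

variable {α : Type*} [MeasurableSpace α] {μ : Measure α} {f : α → ℝ} {s t : Set α}

lemma setAverage_nonneg_of_nonneg (hf₀ : ∀ y, 0 ≤ f y) : 0 ≤ ⨍ y in s, f y ∂μ := by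
  rw [setAverage_eq, smul_eq_mul]
  exact mul_nonneg (inv_nonneg.2 measureReal_nonneg) (integral_nonneg hf₀)

lemma setAverage_le_of_le {M : ℝ} (hM : 0 ≤ M) (hs : μ s ≠ ⊤) (hf : IntegrableOn f s μ)
    (hfM : ∀ y, f y ≤ M) : ⨍ y in s, f y ∂μ ≤ M := by
  rcases eq_or_ne (μ s) 0 with h0 | h0
  · simp [setAverage_eq, measureReal_def, h0, hM]
  · obtain ⟨y, -, hy⟩ := exists_setAverage_le h0 hs hf
    exact hy.trans (hfM y)

lemma setAverage_le_mul_setAverage_of_subset {D : ℝ} (hD : 0 ≤ D) (hst : s ⊆ t)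
    (hμ : μ t ≤ ENNReal.ofReal D * μ s) (hs : μ s ≠ ⊤) (hf : IntegrableOn f t μ)
    (hf₀ : ∀ y, 0 ≤ f y) : ⨍ y in s, f y ∂μ ≤ D * ⨍ y in t, f y ∂μ := by
  have hDs : ENNReal.ofReal D * μ s ≠ ⊤ := ENNReal.mul_ne_top ENNReal.ofReal_ne_top hs
  have ht : μ t ≠ ⊤ := ne_top_of_le_ne_top hDs hμ
  have hμreal : μ.real t ≤ D * μ.real s := by
    simpa [measureReal_def, ENNReal.toReal_mul, hD] using ENNReal.toReal_mono hDs hμ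
  have havg₀ : 0 ≤ ⨍ y in t, f y ∂μ := setAverage_nonneg_of_nonneg hf₀
  rcases measureReal_nonneg.eq_or_lt with h0 | hpos
  · rw [setAverage_eq, ← h0, inv_zero, zero_smul]
    exact mul_nonneg hD havg₀
  calc ⨍ y in s, f y ∂μ = (μ.real s)⁻¹ * ∫ y in s, f y ∂μ := by
        rw [setAverage_eq, smul_eq_mul]
    _ ≤ (μ.real s)⁻¹ * ∫ y in t, f y ∂μ := by
        gcongr ?_ * ?_
        exact setIntegral_mono_set hf (ae_of_all _ hf₀) hst.eventuallyLE
    _ = (μ.real s)⁻¹ * (μ.real t * ⨍ y in t, f y ∂μ) := by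
        rw [← smul_eq_mul (a := μ.real t), measure_smul_setAverage _ ht]
    _ ≤ (μ.real s)⁻¹ * (D * μ.real s * ⨍ y in t, f y ∂μ) := by gcongr
    _ = D * ⨍ y in t, f y ∂μ := by field_simp

end SetAverage

lemma measurable_setAverage_ball {α : Type*} [PseudoMetricSpace α] [MeasurableSpace α]
    {μ : Measure α} {f : α → ℝ} {x : α} (hfin : ∀ r, μ (ball x r) ≠ ⊤)
    (hf : ∀ r, IntegrableOn f (ball x r) μ) (hf₀ : ∀ y, 0 ≤ f y) :
    Measurable fun r => ⨍ y in ball x r, f y ∂μ := by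
  have hvol : Monotone fun r => μ.real (ball x r) := fun r s h =>
    measureReal_mono (ball_subset_ball h) (hfin s)
  have hint : Monotone fun r => ∫ y in ball x r, f y ∂μ := fun r s h =>
    setIntegral_mono_set (hf s) (ae_of_all _ hf₀) (ball_subset_ball h).eventuallyLE
  simp_rw [setAverage_eq, smul_eq_mul]
  exact hvol.measurable.inv.mul hint.measurable

lemma integrableOn_Ioo_mul_of_bounded {g : ℝ → ℝ} {M a : ℝ} (hg : Measurable g)
    (hg₀ : ∀ s, 0 ≤ g s) (hgM : ∀ s, g s ≤ M) :
    IntegrableOn (fun s => s * g s) (Ioo 0 a) := by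
  refine IntegrableOn.of_bound measure_Ioo_lt_top (by fun_prop) (a * M) ?_
  filter_upwards [ae_restrict_mem measurableSet_Ioo] with s hs
  rw [Real.norm_eq_abs, abs_mul, abs_of_pos hs.1, abs_of_nonneg (hg₀ s)]
  exact mul_le_mul hs.2.le (hgM s) (hg₀ s) (hs.1.trans hs.2).le

lemma mul_sq_le_setIntegral_of_le_mul {g : ℝ → ℝ} {D r : ℝ} (hD : 0 < D) (hr : 0 < r)
    (hg : IntegrableOn (fun s => s * g s) (Ioo 0 (2 * r))) (hg₀ : ∀ s, 0 ≤ g s)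
    (hgr : ∀ s ∈ Ioo r (2 * r), g r ≤ D * g s) :
    g r * r ^ 2 ≤ 2 * D / 3 * ∫ s in Ioo 0 (2 * r), s * g s := by
  have hsub : Ioo r (2 * r) ⊆ Ioo 0 (2 * r) := Ioo_subset_Ioo_left hr.le
  have hmass : ∫ s in Ioo r (2 * r), s = 3 * r ^ 2 / 2 := by
    rw [integral_Ioc_eq_integral_Ioo.symm, ← intervalIntegral.integral_of_le (by linarith),
      integral_id]
    ring
  calc g r * r ^ 2 = 2 * D / 3 * ∫ s in Ioo r (2 * r), s * (g r / D) := by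
        rw [integral_mul_const, hmass]
        field_simp
    _ ≤ 2 * D / 3 * ∫ s in Ioo r (2 * r), s * g s := by
        gcongr ?_ * ?_
        refine setIntegral_mono_on
          ((continuous_mul_const (g r / D)).integrableOn_Icc.mono_set Ioo_subset_Icc_self)
          (hg.mono_set hsub) measurableSet_Ioo fun s hs => ?_
        gcongr
        · exact hr.trans hs.1 |>.le
        · rw [div_le_iff₀' hD]; exact hgr s hs
    _ ≤ 2 * D / 3 * ∫ s in Ioo 0 (2 * r), s * g s := by
        gcongr ?_ * ?_
        refine setIntegral_mono_set hg ?_ hsub.eventuallyLE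
        filter_upwards [ae_restrict_mem measurableSet_Ioo] with s hs
        exact mul_nonneg hs.1.le (hg₀ s)

lemma one_sub_mul_log_two_mul_mul_rpow_le {ε t : ℝ} (hε : 0 ≤ ε) (ht : 0 < t) :
    (1 - ε) * Real.log (2 * t) * t ^ (1 + ε) ≤ 2 * t ^ 2 := by
  have hlog : (1 - ε) * Real.log (2 * t) ≤ (2 * t) ^ (1 - ε) := by
    rw [← Real.log_rpow (by positivity)]
    exact Real.log_le_self (by positivity)
  calc (1 - ε) * Real.log (2 * t) * t ^ (1 + ε) ≤ (2 * t) ^ (1 - ε) * t ^ (1 + ε) := by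
        gcongr
    _ = 2 ^ (1 - ε) * t ^ 2 := by
        rw [Real.mul_rpow zero_le_two ht.le, mul_assoc, ← Real.rpow_add ht]
        norm_num
    _ ≤ 2 * t ^ 2 := by
        gcongr
        exact Real.rpow_le_self_of_one_le one_le_two (by linarith)

lemma le_div_one_add_rpow_of_mul_sq_le_log {a M K ε r : ℝ} (hM : 0 ≤ M) (hK : 0 ≤ K)
    (hε₀ : 0 ≤ ε) (hε₁ : ε < 1) (hr : 0 < r) (haM : a ≤ M)
    (ha : a * r ^ 2 ≤ K * Real.log (2 + 2 * r)) :
    a ≤ (4 * M + 8 * K / (1 - ε)) / (1 + r) ^ (1 + ε) := by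
  have hP : 0 < (1 + r) ^ (1 + ε) := by positivity
  have hK' : 0 ≤ 8 * K / (1 - ε) := div_nonneg (by positivity) (by linarith)
  rw [le_div_iff₀ hP]
  rcases le_or_gt r 1 with hr1 | hr1
  · have hP4 : (1 + r) ^ (1 + ε) ≤ 4 := calc
      (1 + r) ^ (1 + ε) ≤ 2 ^ (1 + ε) := by gcongr; linarith
      _ ≤ 2 ^ (2 : ℝ) := Real.rpow_le_rpow_of_exponent_le one_le_two (by linarith)
      _ = 4 := by norm_num
    nlinarith
  · have hlog := one_sub_mul_log_two_mul_mul_rpow_le hε₀ (by linarith : 0 < 1 + r)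
    rw [show 2 * (1 + r) = 2 + 2 * r by ring] at hlog
    have hsq : (1 + r) ^ 2 ≤ 4 * r ^ 2 := by nlinarith
    have : a * (1 + r) ^ (1 + ε) ≤ 8 * K / (1 - ε) := by
      rw [le_div_iff₀ (by linarith), ← mul_le_mul_iff_left₀ (by positivity : 0 < r ^ 2)]
      calc a * (1 + r) ^ (1 + ε) * (1 - ε) * r ^ 2
          = a * r ^ 2 * ((1 - ε) * (1 + r) ^ (1 + ε)) := by ring
        _ ≤ K * Real.log (2 + 2 * r) * ((1 - ε) * (1 + r) ^ (1 + ε)) := by gcongr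
        _ = K * ((1 - ε) * Real.log (2 + 2 * r) * (1 + r) ^ (1 + ε)) := by ring
        _ ≤ K * (2 * (1 + r) ^ 2) := by gcongr
        _ ≤ 8 * K * r ^ 2 := by nlinarith [mul_le_mul_of_nonneg_left hsq hK]
    linarith

theorem average_decay_of_log_integral_bound_general
    {X : Type*} [MetricSpace X] [MeasurableSpace X]
    (μ : Measure X) (x : X)
    (D : ℝ) (hD : 0 < D)
    (hdoub : ∀ s : ℝ, 0 < s → μ (Metric.ball x (2 * s)) ≤ ENNReal.ofReal D * μ (Metric.ball x s))
    (hvol : ∀ s : ℝ, 0 < s → 0 < μ (Metric.ball x s) ∧ μ (Metric.ball x s) < ⊤)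
    (f : X → ℝ) (hf_meas : Measurable f)
    (M : ℝ) (hM : 0 < M) (hf_bd : ∀ y, 0 ≤ f y ∧ f y ≤ M)
    (k : ℝ → ℝ)
    (hk : ∀ s, k s = ((μ (Metric.ball x s)).toReal)⁻¹ * ∫ y in Metric.ball x s, f y ∂μ)
    (C : ℝ) (hC : 0 < C)
    (hint : ∀ r : ℝ, 0 < r → ∫ s in Set.Ioo (0 : ℝ) r, s * k s ≤ C * Real.log (2 + r)) :
    ∀ ε ∈ Set.Ioo (0 : ℝ) 1, ∃ C' : ℝ, 0 < C' ∧
      ∀ r : ℝ, 0 < r → k r ≤ C' / (1 + r) ^ (1 + ε) := by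
  have hk_avg : k = fun s => ⨍ y in ball x s, f y ∂μ := funext fun s => by
    rw [hk, setAverage_eq, smul_eq_mul, measureReal_def]
  have hfin : ∀ s, μ (ball x s) ≠ ⊤ := fun s => by
    rcases le_or_gt s 0 with hs | hs
    · simp [ball_eq_empty.2 hs]
    · exact (hvol s hs).2.ne
  have hf_int : ∀ s, IntegrableOn f (ball x s) μ := fun s =>
    Measure.integrableOn_of_bounded (M := M) (hfin s) hf_meas.aestronglyMeasurable <|
      ae_of_all _ fun y => abs_le.2 ⟨by linarith [hf_bd y], (hf_bd y).2⟩
  have hk₀ : ∀ s, 0 ≤ k s := fun s =>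
    hk_avg ▸ setAverage_nonneg_of_nonneg fun y => (hf_bd y).1
  have hkM : ∀ s, k s ≤ M := fun s =>
    hk_avg ▸ setAverage_le_of_le hM.le (hfin s) (hf_int s) fun y => (hf_bd y).2
  have hk_meas : Measurable k :=
    hk_avg ▸ measurable_setAverage_ball hfin hf_int fun y => (hf_bd y).1
  have hk_doub : ∀ r, 0 < r → ∀ s ∈ Ioo r (2 * r), k r ≤ D * k s := fun r hr s hs => by
    rw [hk_avg]
    exact setAverage_le_mul_setAverage_of_subset hD.le (ball_subset_ball hs.1.le)
      ((measure_mono (ball_subset_ball hs.2.le)).trans (hdoub r hr)) (hfin r) (hf_int s)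
      fun y => (hf_bd y).1
  have hk_sq : ∀ r, 0 < r → k r * r ^ 2 ≤ 2 * D / 3 * C * Real.log (2 + 2 * r) := fun r hr =>
    calc k r * r ^ 2 ≤ 2 * D / 3 * ∫ s in Ioo 0 (2 * r), s * k s :=
          mul_sq_le_setIntegral_of_le_mul hD hr
            (integrableOn_Ioo_mul_of_bounded hk_meas hk₀ hkM) hk₀ (hk_doub r hr)
      _ ≤ 2 * D / 3 * (C * Real.log (2 + 2 * r)) := by gcongr; exact hint (2 * r) (by positivity)
      _ = 2 * D / 3 * C * Real.log (2 + 2 * r) := by ring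
  rintro ε ⟨hε₀, hε₁⟩
  exact ⟨_, by positivity, fun r hr => le_div_one_add_rpow_of_mul_sq_le_log hM.le (by positivity)
    hε₀.le hε₁ hr (hkM r) (hk_sq r hr)⟩

/-- Let `(X, d)` be a metric space with a Borel measure `μ`, `x ∈ X`, doubling at `x`
(`μ(B(x,2s)) ≤ D·μ(B(x,s))`), with `0 < μ(B(x,s)) < ∞` for all `s > 0`. Let `f` be
measurable with `0 ≤ f ≤ M`, `k(x,s)` the average of `f` over `B(x,s)`, and suppose
`∫_0^r s·k(x,s) ds ≤ C·log(2+r)` for all `r > 0`. Then for every `ε ∈ (0,1)` there is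
`C' > 0` with `k(x,r) ≤ C'/(1+r)^{1+ε}` for all `r > 0`. -/
theorem average_decay_of_log_integral_bound
    {X : Type*} [MetricSpace X] [MeasurableSpace X] [BorelSpace X]
    (μ : Measure X) (x : X)
    (D : ℝ) (hD : 0 < D)
    (hdoub : ∀ s : ℝ, 0 < s → μ (Metric.ball x (2 * s)) ≤ ENNReal.ofReal D * μ (Metric.ball x s))
    (hvol : ∀ s : ℝ, 0 < s → 0 < μ (Metric.ball x s) ∧ μ (Metric.ball x s) < ⊤)
    (f : X → ℝ) (hf_meas : Measurable f)
    (M : ℝ) (hM : 0 < M) (hf_bd : ∀ y, 0 ≤ f y ∧ f y ≤ M)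
    (k : ℝ → ℝ)
    (hk : ∀ s, k s = ((μ (Metric.ball x s)).toReal)⁻¹ * ∫ y in Metric.ball x s, f y ∂μ)
    (C : ℝ) (hC : 0 < C)
    (hint : ∀ r : ℝ, 0 < r → ∫ s in Set.Ioo (0 : ℝ) r, s * k s ≤ C * Real.log (2 + r)) :
    ∀ ε ∈ Set.Ioo (0 : ℝ) 1, ∃ C' : ℝ, 0 < C' ∧
      ∀ r : ℝ, 0 < r → k r ≤ C' / (1 + r) ^ (1 + ε) :=
  average_decay_of_log_integral_bound_general μ x D hD hdoub hvol f hf_meas M hM hf_bd k hk C hC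
    hint
end

section
/- Let R : ℝ → ℝ be a continuous function with 0 ≤ R(s) ≤ M for all s ≥ 0 (for some constant M > 0), and suppose s ↦ s·R(s) is monotone nondecreasing on (0, ∞). If there exists C > 0 such that ∫_0^t R(s) ds ≤ C·log(2 + t) for all t ≥ 0, then there exists a constant C' > 0 such that R(T) ≤ C'/(1 + T) for all T ≥ 0. -/
open MeasureTheory Set

/-- Let `R : ℝ → ℝ` be continuous with `0 ≤ R(s) ≤ M` for `s ≥ 0`, with `s ↦ s·R(s)`
monotone nondecreasing on `(0,∞)`. If `∫_0^t R(s) ds ≤ C·log(2+t)` for all `t ≥ 0`,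
then there is `C' > 0` with `R(T) ≤ C'/(1+T)` for all `T ≥ 0`. -/
theorem type_III_decay_of_log_bound
    (R : ℝ → ℝ) (hR_cont : Continuous R)
    (M : ℝ) (hM : 0 < M)
    (hR_bd : ∀ s : ℝ, 0 ≤ s → 0 ≤ R s ∧ R s ≤ M)
    (hmono : MonotoneOn (fun s => s * R s) (Set.Ioi (0 : ℝ)))
    (C : ℝ) (hC : 0 < C)
    (hint : ∀ t : ℝ, 0 ≤ t → ∫ s in (0:ℝ)..t, R s ≤ C * Real.log (2 + t)) :
    ∃ C' : ℝ, 0 < C' ∧ ∀ T : ℝ, 0 ≤ T → R T ≤ C' / (1 + T) := by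
  refine ⟨6 * C + 3 * M, by positivity, fun T hT => ?_⟩
  have h1T : (0:ℝ) < 1 + T := by linarith
  rw [le_div_iff₀ h1T]
  rcases le_or_gt T 2 with hT2 | hT2
  · have := (hR_bd T hT).2
    have := (hR_bd T hT).1
    nlinarith
  -- Now T > 2
  have hTpos : (0:ℝ) < T := by linarith
  have hTsq : T ≤ T ^ 2 := by nlinarith
  have hRT0 : 0 ≤ R T := (hR_bd T hT).1
  -- pointwise bound on [T, T^2]
  have hpt : ∀ s ∈ Set.Icc T (T ^ 2), T * R T / s ≤ R s := by
    intro s hs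
    have hspos : (0:ℝ) < s := lt_of_lt_of_le hTpos hs.1
    have := hmono (mem_Ioi.mpr hTpos) (mem_Ioi.mpr hspos) hs.1
    rw [div_le_iff₀ hspos]
    simpa [mul_comm] using this
  -- integral comparison on [T, T^2]
  have hint1 : IntervalIntegrable (fun s => T * R T / s) volume T (T ^ 2) := by
    apply ContinuousOn.intervalIntegrable
    apply ContinuousOn.div continuousOn_const continuousOn_id
    intro s hs
    rw [Set.uIcc_of_le hTsq] at hs
    exact ne_of_gt (lt_of_lt_of_le hTpos hs.1)
  have hint2 : IntervalIntegrable R volume T (T ^ 2) := hR_cont.intervalIntegrable _ _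
  have hmono_int : ∫ s in T..(T ^ 2), T * R T / s ≤ ∫ s in T..(T ^ 2), R s := by
    apply intervalIntegral.integral_mono_on hTsq hint1 hint2 hpt
  -- compute the left integral
  have hcalc : ∫ s in T..(T ^ 2), T * R T / s = T * R T * Real.log T := by
    have h0 : (0:ℝ) ∉ Set.uIcc T (T ^ 2) := by
      rw [Set.uIcc_of_le hTsq]
      intro h
      exact absurd h.1 (not_le.mpr hTpos)
    simp only [div_eq_mul_inv]
    rw [intervalIntegral.integral_const_mul, integral_inv h0]
    congr 1
    rw [sq]
    rw [mul_div_assoc, div_self (ne_of_gt hTpos), mul_one]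
  -- upper bound on the right integral
  have hsplit : (∫ s in (0:ℝ)..T, R s) + ∫ s in T..(T ^ 2), R s = ∫ s in (0:ℝ)..(T ^ 2), R s :=
    intervalIntegral.integral_add_adjacent_intervals (hR_cont.intervalIntegrable _ _)
      (hR_cont.intervalIntegrable _ _)
  have hnn : 0 ≤ ∫ s in (0:ℝ)..T, R s := by
    apply intervalIntegral.integral_nonneg hT
    intro s hs
    exact (hR_bd s hs.1).1
  have hupper : ∫ s in T..(T ^ 2), R s ≤ C * Real.log (2 + T ^ 2) := by
    have := hint (T ^ 2) (by positivity)
    linarith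
  -- log bound: log(2 + T^2) ≤ 3 * log T
  have hlogT : Real.log 2 ≤ Real.log T := Real.log_le_log (by norm_num) (by linarith)
  have hlog2 : (0:ℝ) < Real.log 2 := Real.log_pos (by norm_num)
  have hlog : Real.log (2 + T ^ 2) ≤ 3 * Real.log T := by
    have h1 : Real.log (2 + T ^ 2) ≤ Real.log (2 * T ^ 2) :=
      Real.log_le_log (by positivity) (by nlinarith)
    have h2 : Real.log (2 * T ^ 2) = Real.log 2 + 2 * Real.log T := by
      rw [Real.log_mul (by norm_num) (by positivity), Real.log_pow]
      push_cast; ring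
    linarith
  -- combine: T * R T * log T ≤ 3 C log T, hence T * R T ≤ 3 C
  have hkey : T * R T * Real.log T ≤ 3 * C * Real.log T := by
    calc T * R T * Real.log T = ∫ s in T..(T ^ 2), T * R T / s := hcalc.symm
      _ ≤ ∫ s in T..(T ^ 2), R s := hmono_int
      _ ≤ C * Real.log (2 + T ^ 2) := hupper
      _ ≤ 3 * C * Real.log T := by nlinarith
  have hTRT : T * R T ≤ 3 * C := by
    have hlogTpos : 0 < Real.log T := lt_of_lt_of_le hlog2 hlogT
    nlinarith
  nlinarith
end
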